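/- arXiv:1704.03208 — 3 statements merged into one kernel-verified Lean document; each statement's English description precedes it below -/
import Mathlib

section
/- Let A be a unital Banach algebra and Q̃ : ℝ × ℝ → A smooth and pointwise invertible. If Q̃ satisfies the mirror meta-mKdV equation Q̃_t = Q̃_xxx - 3 Q̃_x Q̃⁻¹ Q̃_xx, then V := -Q̃⁻¹ Q̃_x satisfies the noncommutative mKdV equation V_t = V_xxx - 3 (V² V_x + V_x V²). -/
variable {A : Type*} [NormedRing A] [NormedAlgebra ℝ A] [CompleteSpace A]

/-- partial derivative in the first (space) variable -/
noncomputable def px (Q : ℝ × ℝ → A) : ℝ × ℝ → A := fun p => deriv (fun x => Q (x, p.2)) p.1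

/-- partial derivative in the second (time) variable -/
noncomputable def pt (Q : ℝ × ℝ → A) : ℝ × ℝ → A := fun p => deriv (fun t => Q (p.1, t)) p.2

section helpers

lemma hasDerivAt_sliceX {f : ℝ × ℝ → A} (hf : Differentiable ℝ f) (p : ℝ × ℝ) :
    HasDerivAt (fun x => f (x, p.2)) (fderiv ℝ f p (1, 0)) p.1 := by
  have h1 : HasDerivAt (fun x : ℝ => (x, p.2)) ((1 : ℝ), (0 : ℝ)) p.1 :=
    (hasDerivAt_id p.1).prodMk (hasDerivAt_const p.1 p.2)
  exact (hf p).hasFDerivAt.comp_hasDerivAt p.1 h1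

lemma hasDerivAt_sliceT {f : ℝ × ℝ → A} (hf : Differentiable ℝ f) (p : ℝ × ℝ) :
    HasDerivAt (fun t => f (p.1, t)) (fderiv ℝ f p (0, 1)) p.2 := by
  have h1 : HasDerivAt (fun t : ℝ => (p.1, t)) ((0 : ℝ), (1 : ℝ)) p.2 :=
    (hasDerivAt_const p.2 p.1).prodMk (hasDerivAt_id p.2)
  exact (hf p).hasFDerivAt.comp_hasDerivAt p.2 h1

lemma px_eq {f : ℝ × ℝ → A} (hf : Differentiable ℝ f) (p : ℝ × ℝ) :
    px f p = fderiv ℝ f p (1, 0) := (hasDerivAt_sliceX hf p).deriv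

lemma pt_eq {f : ℝ × ℝ → A} (hf : Differentiable ℝ f) (p : ℝ × ℝ) :
    pt f p = fderiv ℝ f p (0, 1) := (hasDerivAt_sliceT hf p).deriv

lemma contDiff_px {f : ℝ × ℝ → A} (hf : ContDiff ℝ (⊤ : ℕ∞) f) : ContDiff ℝ (⊤ : ℕ∞) (px f) := by
  have h : px f = fun p => fderiv ℝ f p (1, 0) :=
    funext fun p => px_eq (hf.differentiable (by simp)) p
  rw [h]
  exact (hf.fderiv_right (by simp)).clm_apply contDiff_const

lemma px_neg (f : ℝ × ℝ → A) (p : ℝ × ℝ) : px (fun q => -f q) p = -px f p := by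
  simp only [px]
  exact deriv.neg

lemma pt_neg (f : ℝ × ℝ → A) (p : ℝ × ℝ) : pt (fun q => -f q) p = -pt f p := by
  simp only [pt]
  exact deriv.neg

lemma px_mul {f g : ℝ × ℝ → A} (hf : Differentiable ℝ f) (hg : Differentiable ℝ g) (p : ℝ × ℝ) :
    px (fun q => f q * g q) p = px f p * g p + f p * px g p := by
  simp only [px]
  exact deriv_mul (hasDerivAt_sliceX hf p).differentiableAt
    (hasDerivAt_sliceX hg p).differentiableAt

lemma pt_mul {f g : ℝ × ℝ → A} (hf : Differentiable ℝ f) (hg : Differentiable ℝ g) (p : ℝ × ℝ) :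
    pt (fun q => f q * g q) p = pt f p * g p + f p * pt g p := by
  simp only [pt]
  exact deriv_mul (hasDerivAt_sliceT hf p).differentiableAt
    (hasDerivAt_sliceT hg p).differentiableAt

lemma px_add {f g : ℝ × ℝ → A} (hf : Differentiable ℝ f) (hg : Differentiable ℝ g) (p : ℝ × ℝ) :
    px (fun q => f q + g q) p = px f p + px g p := by
  simp only [px]
  exact deriv_add (hasDerivAt_sliceX hf p).differentiableAt
    (hasDerivAt_sliceX hg p).differentiableAt

lemma px_sub {f g : ℝ × ℝ → A} (hf : Differentiable ℝ f) (hg : Differentiable ℝ g) (p : ℝ × ℝ) :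
    px (fun q => f q - g q) p = px f p - px g p := by
  simp only [px]
  exact deriv_sub (hasDerivAt_sliceX hf p).differentiableAt
    (hasDerivAt_sliceX hg p).differentiableAt

lemma px_const_mul (c : A) {f : ℝ × ℝ → A} (hf : Differentiable ℝ f) (p : ℝ × ℝ) :
    px (fun q => c * f q) p = c * px f p := by
  simp only [px]
  exact deriv_const_mul c (hasDerivAt_sliceX hf p).differentiableAt

lemma px_inverse {Qt : ℝ × ℝ → A} (hd : Differentiable ℝ Qt) (hinv : ∀ p : ℝ × ℝ, IsUnit (Qt p))
    (p : ℝ × ℝ) :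
    px (fun q => Ring.inverse (Qt q)) p
      = -(Ring.inverse (Qt p) * px Qt p * Ring.inverse (Qt p)) := by
  have h2 : HasFDerivAt (Ring.inverse : A → A)
      (-(ContinuousLinearMap.mulLeftRight ℝ A (↑(hinv p).unit⁻¹) (↑(hinv p).unit⁻¹))) (Qt p) := by
    have := hasFDerivAt_ringInverse (𝕜 := ℝ) (hinv p).unit
    rwa [(hinv p).unit_spec] at this
  have h3 : HasDerivAt (fun x => Ring.inverse (Qt (x, p.2)))
      ((-(ContinuousLinearMap.mulLeftRight ℝ A (↑(hinv p).unit⁻¹) (↑(hinv p).unit⁻¹)))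
        (fderiv ℝ Qt p (1, 0))) p.1 :=
    h2.comp_hasDerivAt (f := fun x => Qt (x, p.2)) p.1 (hasDerivAt_sliceX hd p)
  have h4 := h3.deriv
  simp only [px]
  rw [h4]
  simp only [ContinuousLinearMap.neg_apply, ContinuousLinearMap.mulLeftRight_apply]
  rw [← Ring.inverse_unit (hinv p).unit, (hinv p).unit_spec, ← px_eq hd p]
  rfl

lemma pt_inverse {Qt : ℝ × ℝ → A} (hd : Differentiable ℝ Qt) (hinv : ∀ p : ℝ × ℝ, IsUnit (Qt p))
    (p : ℝ × ℝ) :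
    pt (fun q => Ring.inverse (Qt q)) p
      = -(Ring.inverse (Qt p) * pt Qt p * Ring.inverse (Qt p)) := by
  have h2 : HasFDerivAt (Ring.inverse : A → A)
      (-(ContinuousLinearMap.mulLeftRight ℝ A (↑(hinv p).unit⁻¹) (↑(hinv p).unit⁻¹))) (Qt p) := by
    have := hasFDerivAt_ringInverse (𝕜 := ℝ) (hinv p).unit
    rwa [(hinv p).unit_spec] at this
  have h3 : HasDerivAt (fun t => Ring.inverse (Qt (p.1, t)))
      ((-(ContinuousLinearMap.mulLeftRight ℝ A (↑(hinv p).unit⁻¹) (↑(hinv p).unit⁻¹)))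
        (fderiv ℝ Qt p (0, 1))) p.2 :=
    h2.comp_hasDerivAt (f := fun t => Qt (p.1, t)) p.2 (hasDerivAt_sliceT hd p)
  have h4 := h3.deriv
  simp only [pt]
  rw [h4]
  simp only [ContinuousLinearMap.neg_apply, ContinuousLinearMap.mulLeftRight_apply]
  rw [← Ring.inverse_unit (hinv p).unit, (hinv p).unit_spec, ← pt_eq hd p]
  rfl

lemma pt_px {f : ℝ × ℝ → A} (hf : ContDiff ℝ (⊤ : ℕ∞) f) (p : ℝ × ℝ) :
    pt (px f) p = px (pt f) p := by
  have hd : Differentiable ℝ f := hf.differentiable (by simp)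
  have hf' : ContDiff ℝ (⊤ : ℕ∞) (fderiv ℝ f) := hf.fderiv_right (by simp)
  have hfd : Differentiable ℝ (fderiv ℝ f) := hf'.differentiable (by simp)
  have key : ∀ v w : ℝ × ℝ, fderiv ℝ (fun q => fderiv ℝ f q v) p w
      = fderiv ℝ (fderiv ℝ f) p w v := by
    intro v w
    have h : HasFDerivAt (fun q => fderiv ℝ f q v)
        ((ContinuousLinearMap.apply ℝ A v).comp (fderiv ℝ (fderiv ℝ f) p)) p :=
      (ContinuousLinearMap.apply ℝ A v).hasFDerivAt.comp p (hfd p).hasFDerivAt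
    rw [h.fderiv]
    rfl
  have hdx : Differentiable ℝ (fun q => fderiv ℝ f q ((1 : ℝ), (0 : ℝ))) :=
    (hf'.clm_apply contDiff_const).differentiable (by simp)
  have hdt : Differentiable ℝ (fun q => fderiv ℝ f q ((0 : ℝ), (1 : ℝ))) :=
    (hf'.clm_apply contDiff_const).differentiable (by simp)
  have e1 : px f = fun q => fderiv ℝ f q (1, 0) := funext fun q => px_eq hd q
  have e2 : pt f = fun q => fderiv ℝ f q (0, 1) := funext fun q => pt_eq hd q
  rw [e1, e2, pt_eq hdx p, px_eq hdt p, key, key]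
  exact second_derivative_symmetric (fun y => (hd y).hasFDerivAt) (hfd p).hasFDerivAt _ _

end helpers

set_option maxHeartbeats 4000000 in
theorem stmt_3 (Qt : ℝ × ℝ → A) (hQ : ContDiff ℝ (⊤ : ℕ∞) Qt)
    (hinv : ∀ p : ℝ × ℝ, IsUnit (Qt p))
    (heq : ∀ p : ℝ × ℝ, pt (Qt) p = px (px (px (Qt))) p - 3 * (px (Qt) p * Ring.inverse ((Qt) p) * px (px (Qt)) p)) :
    ∀ p : ℝ × ℝ, pt (fun q => -(Ring.inverse (Qt q) * px Qt q)) p = px (px (px (fun q => -(Ring.inverse (Qt q) * px Qt q)))) p - 3 * ((fun q => -(Ring.inverse (Qt q) * px Qt q)) p * (fun q => -(Ring.inverse (Qt q) * px Qt q)) p * px (fun q => -(Ring.inverse (Qt q) * px Qt q)) p + px (fun q => -(Ring.inverse (Qt q) * px Qt q)) p * ((fun q => -(Ring.inverse (Qt q) * px Qt q)) p * (fun q => -(Ring.inverse (Qt q) * px Qt q)) p)) := by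
  intro p
  have hd : Differentiable ℝ Qt := hQ.differentiable (by simp)
  have haC : ContDiff ℝ (⊤ : ℕ∞) (px Qt) := contDiff_px hQ
  have hbC : ContDiff ℝ (⊤ : ℕ∞) (px (px Qt)) := contDiff_px haC
  have hcC : ContDiff ℝ (⊤ : ℕ∞) (px (px (px Qt))) := contDiff_px hbC
  have hA : Differentiable ℝ (px Qt) := haC.differentiable (by simp)
  have hB : Differentiable ℝ (px (px Qt)) := hbC.differentiable (by simp)
  have hC : Differentiable ℝ (px (px (px Qt))) := hcC.differentiable (by simp)
  have hR : Differentiable ℝ (fun q => Ring.inverse (Qt q)) := by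
    have hRc : ContDiff ℝ (⊤ : ℕ∞) (fun q => Ring.inverse (Qt q)) := by
      rw [contDiff_iff_contDiffAt]
      intro q
      have h1 : ContDiffAt ℝ (⊤ : ℕ∞) (Ring.inverse : A → A) (Qt q) := by
        have := contDiffAt_ringInverse ℝ (n := (⊤ : ℕ∞)) (hinv q).unit
        rwa [(hinv q).unit_spec] at this
      exact h1.comp q hQ.contDiffAt
    exact hRc.differentiable (by simp)
  -- first x-derivative of V
  have hVx_pt : ∀ q : ℝ × ℝ, px (fun q => -(Ring.inverse (Qt q) * px Qt q)) q
      = Ring.inverse (Qt q) * px Qt q * Ring.inverse (Qt q) * px Qt q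
        - Ring.inverse (Qt q) * px (px Qt) q := by
    intro q
    rw [px_neg (fun q => Ring.inverse (Qt q) * px Qt q) q, px_mul hR hA q,
      px_inverse hd hinv q]
    noncomm_ring
  have hVx : px (fun q => -(Ring.inverse (Qt q) * px Qt q))
      = fun q => Ring.inverse (Qt q) * px Qt q * Ring.inverse (Qt q) * px Qt q
        - Ring.inverse (Qt q) * px (px Qt) q := funext hVx_pt
  -- second x-derivative of V
  have hVxx_pt : ∀ q : ℝ × ℝ, px (fun q => Ring.inverse (Qt q) * px Qt q * Ring.inverse (Qt q) * px Qt q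
        - Ring.inverse (Qt q) * px (px Qt) q) q
      = Ring.inverse (Qt q) * px (px Qt) q * Ring.inverse (Qt q) * px Qt q
        + Ring.inverse (Qt q) * px Qt q * Ring.inverse (Qt q) * px (px Qt) q
        + Ring.inverse (Qt q) * px Qt q * Ring.inverse (Qt q) * px (px Qt) q
        - Ring.inverse (Qt q) * px Qt q * Ring.inverse (Qt q) * px Qt q * Ring.inverse (Qt q) * px Qt q
        - Ring.inverse (Qt q) * px Qt q * Ring.inverse (Qt q) * px Qt q * Ring.inverse (Qt q) * px Qt q
        - Ring.inverse (Qt q) * px (px (px Qt)) q := by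
    intro q
    rw [px_sub (((hR.fun_mul hA).fun_mul hR).fun_mul hA) (hR.fun_mul hB) q,
      px_mul ((hR.fun_mul hA).fun_mul hR) hA q, px_mul (hR.fun_mul hA) hR q, px_mul hR hA q,
      px_mul hR hB q, px_inverse hd hinv q]
    noncomm_ring
  have hVxx : px (fun q => Ring.inverse (Qt q) * px Qt q * Ring.inverse (Qt q) * px Qt q
        - Ring.inverse (Qt q) * px (px Qt) q)
      = fun q => Ring.inverse (Qt q) * px (px Qt) q * Ring.inverse (Qt q) * px Qt q
        + Ring.inverse (Qt q) * px Qt q * Ring.inverse (Qt q) * px (px Qt) q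
        + Ring.inverse (Qt q) * px Qt q * Ring.inverse (Qt q) * px (px Qt) q
        - Ring.inverse (Qt q) * px Qt q * Ring.inverse (Qt q) * px Qt q * Ring.inverse (Qt q) * px Qt q
        - Ring.inverse (Qt q) * px Qt q * Ring.inverse (Qt q) * px Qt q * Ring.inverse (Qt q) * px Qt q
        - Ring.inverse (Qt q) * px (px (px Qt)) q := funext hVxx_pt
  have hQt_t : pt Qt = fun q => px (px (px Qt)) q
      - 3 * (px Qt q * Ring.inverse (Qt q) * px (px Qt) q) := funext heq
  -- differentiability abbreviations
  have hT1 : Differentiable ℝ (fun q => Ring.inverse (Qt q) * px (px Qt) q * Ring.inverse (Qt q) * px Qt q) := ((hR.mul hB).mul hR).mul hA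
  have hT2 : Differentiable ℝ (fun q => Ring.inverse (Qt q) * px Qt q * Ring.inverse (Qt q) * px (px Qt) q) := ((hR.mul hA).mul hR).mul hB
  have hT4 : Differentiable ℝ (fun q => Ring.inverse (Qt q) * px Qt q * Ring.inverse (Qt q) * px Qt q * Ring.inverse (Qt q) * px Qt q) := ((((hR.mul hA).mul hR).mul hA).mul hR).mul hA
  have hT6 : Differentiable ℝ (fun q => Ring.inverse (Qt q) * px (px (px Qt)) q) := hR.mul hC
  -- rewrite the goal
  simp only [hVx, hVxx]
  rw [pt_neg (fun q => Ring.inverse (Qt q) * px Qt q) p, pt_mul hR hA p,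
    pt_inverse hd hinv p, pt_px hQ p]
  simp only [hQt_t]
  rw [px_sub hC (((hA.fun_mul hR).fun_mul hB).const_mul 3) p,
    px_const_mul 3 ((hA.fun_mul hR).fun_mul hB) p, px_mul (hA.fun_mul hR) hB p, px_mul hA hR p,
    px_sub ((((hT1.fun_add hT2).fun_add hT2).fun_sub hT4).fun_sub hT4) hT6 p,
    px_sub (((hT1.fun_add hT2).fun_add hT2).fun_sub hT4) hT4 p,
    px_sub ((hT1.fun_add hT2).fun_add hT2) hT4 p,
    px_add (hT1.fun_add hT2) hT2 p, px_add hT1 hT2 p,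
    px_mul ((((hR.fun_mul hA).fun_mul hR).fun_mul hA).fun_mul hR) hA p,
    px_mul (((hR.fun_mul hA).fun_mul hR).fun_mul hA) hR p,
    px_mul ((hR.fun_mul hB).fun_mul hR) hA p,
    px_mul ((hR.fun_mul hA).fun_mul hR) hA p,
    px_mul ((hR.fun_mul hA).fun_mul hR) hB p,
    px_mul (hR.fun_mul hB) hR p,
    px_mul (hR.fun_mul hA) hR p,
    px_mul hR hB p, px_mul hR hA p,
    px_mul hR hC p, px_inverse hd hinv p]
  noncomm_ring
end

section
/- Let A be a unital Banach algebra and Q̃ : ℝ × ℝ → A smooth and pointwise invertible. If Q̃ satisfies the mirror meta-mKdV equation Q̃_t = Q̃_xxx - 3 Q̃_x Q̃⁻¹ Q̃_xx, then Ṽ := -Q̃_x Q̃⁻¹ satisfies the alternative noncommutative mKdV equation Ṽ_t = Ṽ_xxx + 3 (Ṽ Ṽ_xx - Ṽ_xx Ṽ) - 6 Ṽ Ṽ_x Ṽ. -/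
variable {A : Type*} [NormedRing A] [NormedAlgebra ℝ A] [CompleteSpace A]

set_option linter.unusedSectionVars false


def Dx (f g : ℝ × ℝ → A) : Prop := ∀ p : ℝ × ℝ, HasDerivAt (fun x => f (x, p.2)) (g p) p.1
def Dt (f g : ℝ × ℝ → A) : Prop := ∀ p : ℝ × ℝ, HasDerivAt (fun t => f (p.1, t)) (g p) p.2

lemma Dx.px_eq {f g : ℝ × ℝ → A} (h : Dx f g) : px f = g := funext fun p => (h p).deriv
lemma Dt.pt_eq {f g : ℝ × ℝ → A} (h : Dt f g) : pt f = g := funext fun p => (h p).deriv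

lemma Dx.neg {f f' : ℝ × ℝ → A} (h : Dx f f') : Dx (fun p => -f p) (fun p => -f' p) :=
  fun p => (h p).neg
lemma Dx.add {f f' g g' : ℝ × ℝ → A} (h : Dx f f') (h2 : Dx g g') :
    Dx (fun p => f p + g p) (fun p => f' p + g' p) := fun p => (h p).add (h2 p)
lemma Dx.sub {f f' g g' : ℝ × ℝ → A} (h : Dx f f') (h2 : Dx g g') :
    Dx (fun p => f p - g p) (fun p => f' p - g' p) := fun p => (h p).sub (h2 p)
lemma Dx.mul {f f' g g' : ℝ × ℝ → A} (h : Dx f f') (h2 : Dx g g') :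
    Dx (fun p => f p * g p) (fun p => f' p * g p + f p * g' p) := fun p => (h p).mul (h2 p)
lemma Dx.const_mul (c : A) {f f' : ℝ × ℝ → A} (h : Dx f f') :
    Dx (fun p => c * f p) (fun p => c * f' p) := fun p => (h p).const_mul c

lemma Dt.neg {f f' : ℝ × ℝ → A} (h : Dt f f') : Dt (fun p => -f p) (fun p => -f' p) :=
  fun p => (h p).neg
lemma Dt.mul {f f' g g' : ℝ × ℝ → A} (h : Dt f f') (h2 : Dt g g') :
    Dt (fun p => f p * g p) (fun p => f' p * g p + f p * g' p) := fun p => (h p).mul (h2 p)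

lemma Dx.inverse {f f' : ℝ × ℝ → A} (h : Dx f f') (hu : ∀ p, IsUnit (f p)) :
    Dx (fun p => Ring.inverse (f p))
      (fun p => -(Ring.inverse (f p) * f' p * Ring.inverse (f p))) := by
  intro p
  obtain ⟨u, hu'⟩ := hu p
  have h1 : HasFDerivAt Ring.inverse
      (-ContinuousLinearMap.mulLeftRight ℝ A ↑u⁻¹ ↑u⁻¹) (f (p.1, p.2)) := by
    rw [show f (p.1, p.2) = (u : A) from hu'.symm]
    exact hasFDerivAt_ringInverse u
  have h2 := h1.comp_hasDerivAt p.1 (h p)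
  have hru : Ring.inverse (f p) = (↑u⁻¹ : A) := by rw [← hu', Ring.inverse_unit]
  simpa [hru, Function.comp_def] using h2

lemma Dt.inverse {f f' : ℝ × ℝ → A} (h : Dt f f') (hu : ∀ p, IsUnit (f p)) :
    Dt (fun p => Ring.inverse (f p))
      (fun p => -(Ring.inverse (f p) * f' p * Ring.inverse (f p))) := by
  intro p
  obtain ⟨u, hu'⟩ := hu p
  have h1 : HasFDerivAt Ring.inverse
      (-ContinuousLinearMap.mulLeftRight ℝ A ↑u⁻¹ ↑u⁻¹) (f (p.1, p.2)) := by
    rw [show f (p.1, p.2) = (u : A) from hu'.symm]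
    exact hasFDerivAt_ringInverse u
  have h2 := h1.comp_hasDerivAt p.2 (h p)
  have hru : Ring.inverse (f p) = (↑u⁻¹ : A) := by rw [← hu', Ring.inverse_unit]
  simpa [hru, Function.comp_def] using h2

lemma Dx.of_contDiff {f : ℝ × ℝ → A} (hf : ContDiff ℝ (⊤ : ℕ∞) f) : Dx f (px f) := by
  intro p
  have hd : DifferentiableAt ℝ (fun x => f (x, p.2)) p.1 :=
    (hf.differentiable (by simp) (p.1, p.2)).comp p.1
      (differentiableAt_id.prodMk (differentiableAt_const _))
  exact hd.hasDerivAt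

lemma Dt.of_contDiff {f : ℝ × ℝ → A} (hf : ContDiff ℝ (⊤ : ℕ∞) f) : Dt f (pt f) := by
  intro p
  have hd : DifferentiableAt ℝ (fun t => f (p.1, t)) p.2 :=
    (hf.differentiable (by simp) (p.1, p.2)).comp p.2
      ((differentiableAt_const _).prodMk differentiableAt_id)
  exact hd.hasDerivAt

lemma px_eq_fderiv {f : ℝ × ℝ → A} (hf : ContDiff ℝ (⊤ : ℕ∞) f) (p : ℝ × ℝ) :
    px f p = fderiv ℝ f p (1, 0) := by
  have h1 : HasDerivAt (fun x : ℝ => (x, p.2)) ((1 : ℝ), (0 : ℝ)) p.1 :=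
    (hasDerivAt_id _).prodMk (hasDerivAt_const _ _)
  exact ((hf.differentiable (by simp) p).hasFDerivAt.comp_hasDerivAt p.1 h1).deriv

lemma pt_eq_fderiv {f : ℝ × ℝ → A} (hf : ContDiff ℝ (⊤ : ℕ∞) f) (p : ℝ × ℝ) :
    pt f p = fderiv ℝ f p (0, 1) := by
  have h1 : HasDerivAt (fun t : ℝ => (p.1, t)) ((0 : ℝ), (1 : ℝ)) p.2 :=
    (hasDerivAt_const _ _).prodMk (hasDerivAt_id _)
  exact ((hf.differentiable (by simp) p).hasFDerivAt.comp_hasDerivAt p.2 h1).deriv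

lemma pt_px_comm {f : ℝ × ℝ → A} (hf : ContDiff ℝ (⊤ : ℕ∞) f) : pt (px f) = px (pt f) := by
  funext p
  have hfd : ContDiff ℝ (⊤ : ℕ∞) (fderiv ℝ f) := hf.fderiv_right (by simp)
  have hsymm : IsSymmSndFDerivAt ℝ f p :=
    hf.contDiffAt.isSymmSndFDerivAt (by rw [minSmoothness_of_isRCLikeNormedField]; exact WithTop.coe_le_coe.mpr (le_top : (2 : ℕ∞) ≤ ⊤))
  have e1 : pt (px f) p = fderiv ℝ (fderiv ℝ f) p (0, 1) (1, 0) := by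
    have hx : px f = fun q => fderiv ℝ f q (1, 0) := funext fun q => px_eq_fderiv hf q
    rw [hx]
    have h2 : HasDerivAt (fun t : ℝ => (p.1, t)) ((0 : ℝ), (1 : ℝ)) p.2 :=
      (hasDerivAt_const _ _).prodMk (hasDerivAt_id _)
    have h3 : HasFDerivAt (fun q => fderiv ℝ f q (1, 0))
        ((ContinuousLinearMap.apply ℝ A ((1 : ℝ), (0 : ℝ))).comp
          (fderiv ℝ (fderiv ℝ f) p)) p :=
      (ContinuousLinearMap.apply ℝ A ((1 : ℝ), (0 : ℝ))).hasFDerivAt.comp p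
        ((hfd.differentiable (by simp) p).hasFDerivAt)
    exact (h3.comp_hasDerivAt p.2 h2).deriv
  have e2 : px (pt f) p = fderiv ℝ (fderiv ℝ f) p (1, 0) (0, 1) := by
    have ht : pt f = fun q => fderiv ℝ f q (0, 1) := funext fun q => pt_eq_fderiv hf q
    rw [ht]
    have h2 : HasDerivAt (fun x : ℝ => (x, p.2)) ((1 : ℝ), (0 : ℝ)) p.1 :=
      (hasDerivAt_id _).prodMk (hasDerivAt_const _ _)
    have h3 : HasFDerivAt (fun q => fderiv ℝ f q (0, 1))
        ((ContinuousLinearMap.apply ℝ A ((0 : ℝ), (1 : ℝ))).comp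
          (fderiv ℝ (fderiv ℝ f) p)) p :=
      (ContinuousLinearMap.apply ℝ A ((0 : ℝ), (1 : ℝ))).hasFDerivAt.comp p
        ((hfd.differentiable (by simp) p).hasFDerivAt)
    exact (h3.comp_hasDerivAt p.1 h2).deriv
  rw [e1, e2, hsymm]

theorem stmt_4 (Qt : ℝ × ℝ → A) (hQ : ContDiff ℝ (⊤ : ℕ∞) Qt)
    (hinv : ∀ p : ℝ × ℝ, IsUnit (Qt p))
    (heq : ∀ p : ℝ × ℝ, pt (Qt) p = px (px (px (Qt))) p - 3 * (px (Qt) p * Ring.inverse ((Qt) p) * px (px (Qt)) p)) :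
    ∀ p : ℝ × ℝ, pt (fun q => -(px Qt q * Ring.inverse (Qt q))) p = px (px (px (fun q => -(px Qt q * Ring.inverse (Qt q))))) p + 3 * ((fun q => -(px Qt q * Ring.inverse (Qt q))) p * px (px (fun q => -(px Qt q * Ring.inverse (Qt q)))) p - px (px (fun q => -(px Qt q * Ring.inverse (Qt q)))) p * (fun q => -(px Qt q * Ring.inverse (Qt q))) p) - 6 * ((fun q => -(px Qt q * Ring.inverse (Qt q))) p * px (fun q => -(px Qt q * Ring.inverse (Qt q))) p * (fun q => -(px Qt q * Ring.inverse (Qt q))) p) := by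
  have hQ1s : ContDiff ℝ (⊤ : ℕ∞) (px Qt) := contDiff_px hQ
  have hQ2s : ContDiff ℝ (⊤ : ℕ∞) (px (px Qt)) := contDiff_px hQ1s
  have hQ3s : ContDiff ℝ (⊤ : ℕ∞) (px (px (px Qt))) := contDiff_px hQ2s
  have DxQ : Dx Qt (px Qt) := Dx.of_contDiff hQ
  have DxQ1 : Dx (px Qt) (px (px Qt)) := Dx.of_contDiff hQ1s
  have DxQ2 : Dx (px (px Qt)) (px (px (px Qt))) := Dx.of_contDiff hQ2s
  have DxQ3 : Dx (px (px (px Qt))) (px (px (px (px Qt)))) := Dx.of_contDiff hQ3s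
  have DxR := DxQ.inverse hinv
  have DtQ : Dt Qt (pt Qt) := Dt.of_contDiff hQ
  have DtQ1 : Dt (px Qt) (pt (px Qt)) := Dt.of_contDiff hQ1s
  have DtR := DtQ.inverse hinv
  have hW1 : px (fun q => -(px Qt q * Ring.inverse (Qt q))) =
      (fun p => -(px (px Qt) p * Ring.inverse (Qt p)) + px Qt p * Ring.inverse (Qt p) * px Qt p * Ring.inverse (Qt p)) :=
    (Dx.neg (Dx.mul DxQ1 DxR)).px_eq.trans (by funext p; noncomm_ring)
  have hW2 : px (fun p => -(px (px Qt) p * Ring.inverse (Qt p)) + px Qt p * Ring.inverse (Qt p) * px Qt p * Ring.inverse (Qt p)) =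
      (fun p => -(px (px (px Qt)) p * Ring.inverse (Qt p)) + 2 * (px (px Qt) p * Ring.inverse (Qt p) * px Qt p * Ring.inverse (Qt p)) + px Qt p * Ring.inverse (Qt p) * px (px Qt) p * Ring.inverse (Qt p) - 2 * (px Qt p * Ring.inverse (Qt p) * px Qt p * Ring.inverse (Qt p) * px Qt p * Ring.inverse (Qt p))) :=
    (Dx.add (Dx.neg (Dx.mul (DxQ2) (DxR))) (Dx.mul (Dx.mul (Dx.mul (DxQ1) (DxR)) (DxQ1)) (DxR))).px_eq.trans (by funext p; noncomm_ring)
  have hW3 : px (fun p => -(px (px (px Qt)) p * Ring.inverse (Qt p)) + 2 * (px (px Qt) p * Ring.inverse (Qt p) * px Qt p * Ring.inverse (Qt p)) + px Qt p * Ring.inverse (Qt p) * px (px Qt) p * Ring.inverse (Qt p) - 2 * (px Qt p * Ring.inverse (Qt p) * px Qt p * Ring.inverse (Qt p) * px Qt p * Ring.inverse (Qt p))) =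
      (fun p => -(px (px (px (px Qt))) p * Ring.inverse (Qt p) + px (px (px Qt)) p * -(Ring.inverse (Qt p) * px Qt p * Ring.inverse (Qt p))) + 2 * (((px (px (px Qt)) p * Ring.inverse (Qt p) + px (px Qt) p * -(Ring.inverse (Qt p) * px Qt p * Ring.inverse (Qt p))) * px Qt p + px (px Qt) p * Ring.inverse (Qt p) * px (px Qt) p) * Ring.inverse (Qt p) + px (px Qt) p * Ring.inverse (Qt p) * px Qt p * -(Ring.inverse (Qt p) * px Qt p * Ring.inverse (Qt p))) + (((px (px Qt) p * Ring.inverse (Qt p) + px Qt p * -(Ring.inverse (Qt p) * px Qt p * Ring.inverse (Qt p))) * px (px Qt) p + px Qt p * Ring.inverse (Qt p) * px (px (px Qt)) p) * Ring.inverse (Qt p) + px Qt p * Ring.inverse (Qt p) * px (px Qt) p * -(Ring.inverse (Qt p) * px Qt p * Ring.inverse (Qt p))) - 2 * (((((px (px Qt) p * Ring.inverse (Qt p) + px Qt p * -(Ring.inverse (Qt p) * px Qt p * Ring.inverse (Qt p))) * px Qt p + px Qt p * Ring.inverse (Qt p) * px (px Qt) p) * Ring.inverse (Qt p) + px Qt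 p * Ring.inverse (Qt p) * px Qt p * -(Ring.inverse (Qt p) * px Qt p * Ring.inverse (Qt p))) * px Qt p + px Qt p * Ring.inverse (Qt p) * px Qt p * Ring.inverse (Qt p) * px (px Qt) p) * Ring.inverse (Qt p) + px Qt p * Ring.inverse (Qt p) * px Qt p * Ring.inverse (Qt p) * px Qt p * -(Ring.inverse (Qt p) * px Qt p * Ring.inverse (Qt p)))) :=
    (Dx.sub (Dx.add (Dx.add (Dx.neg (Dx.mul (DxQ3) (DxR))) (Dx.const_mul 2 (Dx.mul (Dx.mul (Dx.mul (DxQ2) (DxR)) (DxQ1)) (DxR)))) (Dx.mul (Dx.mul (Dx.mul (DxQ1) (DxR)) (DxQ2)) (DxR))) (Dx.const_mul 2 (Dx.mul (Dx.mul (Dx.mul (Dx.mul (Dx.mul (DxQ1) (DxR)) (DxQ1)) (DxR)) (DxQ1)) (DxR)))).px_eq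
  have hVt : pt (fun q => -(px Qt q * Ring.inverse (Qt q))) =
      (fun p => -(pt (px Qt) p * Ring.inverse (Qt p) + px Qt p * -(Ring.inverse (Qt p) * pt Qt p * Ring.inverse (Qt p)))) :=
    (Dt.neg (Dt.mul DtQ1 DtR)).pt_eq
  have hcomm : pt (px Qt) = px (pt Qt) := pt_px_comm hQ
  have hEq : pt Qt = (fun p => px (px (px Qt)) p - 3 * (px Qt p * Ring.inverse (Qt p) * px (px Qt) p)) := funext heq
  have hE : px (fun p => px (px (px Qt)) p - 3 * (px Qt p * Ring.inverse (Qt p) * px (px Qt) p)) = (fun p => px (px (px (px Qt))) p - 3 * ((px (px Qt) p * Ring.inverse (Qt p) + px Qt p * -(Ring.inverse (Qt p) * px Qt p * Ring.inverse (Qt p))) * px (px Qt) p + px Qt p * Ring.inverse (Qt p) * px (px (px Qt)) p)) :=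
    (Dx.sub (DxQ3) (Dx.const_mul 3 (Dx.mul (Dx.mul (DxQ1) (DxR)) (DxQ2)))).px_eq
  intro p
  rw [hVt, hW1, hW2, hW3]
  beta_reduce
  rw [hcomm, hEq, hE]
  beta_reduce
  noncomm_ring
end

section
/- Let A be a unital Banach algebra, A₀, B ∈ A with A₀ invertible, and L(x,t) = exp(A₀ x + A₀³ t) B. On the set where I + L is invertible, the function W := (I + L)⁻¹ (A₀ L + L A₀) satisfies the noncommutative potential KdV equation W_t = W_xxx + 3 W_x². -/
variable {A : Type*} [NormedRing A] [NormedAlgebra ℝ A] [CompleteSpace A]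

/-!
With `V = (1 + L)⁻¹` and `c = V A₀`, the identity `L V = 1 - V` turns the derivative of
`W = V (A₀ L + L A₀)` along any direction in which `L' = m L` with `m` commuting with `A₀` into
`W' = V m W`. Hence `W_x = c W`, `W_t = c A₀² W` and `c_x = c² - c A₀`, so every
`x`-derivative of `W` is a noncommutative polynomial in `c`, `A₀` multiplied by `W`. The single
further relation `W c = A₀ c + c A₀ - 2 c²` reduces `W_xxx + 3 W_x²` to `c A₀² W`.
-/

open Set

section Algebra

variable {R : Type*} [Ring R]

theorem mul_inverse_one_add {l : R} (hl : IsUnit (1 + l)) :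
    l * Ring.inverse (1 + l) = 1 - Ring.inverse (1 + l) := by
  have h := Ring.mul_inverse_cancel _ hl
  rw [add_mul, one_mul] at h
  exact eq_sub_of_add_eq' h

theorem inverse_one_add_mul {l : R} (hl : IsUnit (1 + l)) :
    Ring.inverse (1 + l) * l = 1 - Ring.inverse (1 + l) := by
  have h := Ring.inverse_mul_cancel _ hl
  rw [mul_add, mul_one] at h
  exact eq_sub_of_add_eq' h

noncomputable def kdvPotential (a l : R) : R :=
  Ring.inverse (1 + l) * (a * l + l * a)

theorem kdvPotential_mul_inverse_one_add_mul (a : R) {l : R} (hl : IsUnit (1 + l)) :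
    kdvPotential a l * (Ring.inverse (1 + l) * a) =
      a * (Ring.inverse (1 + l) * a) + Ring.inverse (1 + l) * a * a
        - 2 * (Ring.inverse (1 + l) * a * (Ring.inverse (1 + l) * a)) := by
  set V := Ring.inverse (1 + l)
  calc kdvPotential a l * (V * a)
      = V * a * (l * V) * a + (V * l) * a * V * a := by unfold kdvPotential; noncomm_ring
    _ = _ := by rw [mul_inverse_one_add hl, inverse_one_add_mul hl]; noncomm_ring

theorem mul_pow_two_eq_of_mul_eq {a c w : R} (h : w * c = a * c + c * a - 2 * (c * c)) :
    c * a ^ 2 * w =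
      (6 * (c * c * c) - 3 * (c * a * c) - 3 * (c * c * a) + c * a * a) * w
        + 3 * (c * w * (c * w)) := by
  calc c * a ^ 2 * w
      = (6 * (c * c * c) - 3 * (c * a * c) - 3 * (c * c * a) + c * a * a) * w
          + 3 * (c * (a * c + c * a - 2 * (c * c)) * w) := by noncomm_ring
    _ = _ := by rw [← h]; noncomm_ring

end Algebra

section Derivatives

variable {𝕜 : Type*} [NontriviallyNormedField 𝕜] {R : Type*} [NormedRing R] [NormedAlgebra 𝕜 R]
  [HasSummableGeomSeries R] {x : 𝕜}

theorem HasDerivAt.ringInverse {f : 𝕜 → R} {f' : R} (hf : HasDerivAt f f' x)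
    (hx : IsUnit (f x)) :
    HasDerivAt (fun y => Ring.inverse (f y))
      (-(Ring.inverse (f x) * f' * Ring.inverse (f x))) x := by
  obtain ⟨u, hu⟩ := hx
  have hinv : HasFDerivAt Ring.inverse _ (f x) := hu ▸ hasFDerivAt_ringInverse (𝕜 := 𝕜) u
  simpa [← hu, Ring.inverse_unit, Function.comp_def] using hinv.comp_hasDerivAt x hf

theorem HasDerivAt.inverse_one_add_mul {ℓ : 𝕜 → R} {a : R} (hℓ : HasDerivAt ℓ (a * ℓ x) x)
    (hx : IsUnit (1 + ℓ x)) :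
    HasDerivAt (fun y => Ring.inverse (1 + ℓ y) * a)
      (Ring.inverse (1 + ℓ x) * a * (Ring.inverse (1 + ℓ x) * a)
        - Ring.inverse (1 + ℓ x) * a * a) x := by
  refine (((hℓ.const_add 1).ringInverse hx).mul_const a).congr_deriv ?_
  set V := Ring.inverse (1 + ℓ x)
  calc -(V * (a * ℓ x) * V) * a = V * a * (-(ℓ x * V)) * a := by noncomm_ring
    _ = _ := by rw [mul_inverse_one_add hx]; noncomm_ring

theorem HasDerivAt.kdvPotential {ℓ : 𝕜 → R} {a m : R} (hℓ : HasDerivAt ℓ (m * ℓ x) x)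
    (hma : Commute m a) (hx : IsUnit (1 + ℓ x)) :
    HasDerivAt (fun y => kdvPotential a (ℓ y))
      (Ring.inverse (1 + ℓ x) * m * kdvPotential a (ℓ x)) x := by
  refine (((hℓ.const_add 1).ringInverse hx).mul
    ((hℓ.const_mul a).add (hℓ.mul_const a))).congr_deriv ?_
  set V := Ring.inverse (1 + ℓ x)
  calc -(V * (m * ℓ x) * V) * (a * ℓ x + ℓ x * a) + V * (a * (m * ℓ x) + m * ℓ x * a)
      = V * m * (1 - ℓ x * V) * (a * ℓ x + ℓ x * a) := by
        rw [← mul_assoc a m, ← hma.eq]; noncomm_ring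
    _ = _ := by rw [mul_inverse_one_add hx]; unfold _root_.kdvPotential; noncomm_ring

end Derivatives

theorem Commute.hasDerivAt_exp_smul_add {𝔸 : Type*} [NormedRing 𝔸] [NormedAlgebra ℝ 𝔸]
    [CompleteSpace 𝔸] {a b : 𝔸} (hab : Commute a b) (x : ℝ) :
    HasDerivAt (fun y : ℝ => NormedSpace.exp (y • a + b)) (a * NormedSpace.exp (x • a + b)) x := by
  have hsplit : ∀ y : ℝ,
      NormedSpace.exp (y • a + b) = NormedSpace.exp (y • a) * NormedSpace.exp b := fun y =>
    NormedSpace.exp_add_of_commute_of_mem_ball (𝕂 := ℝ) (hab.smul_left y)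
      ((NormedSpace.expSeries_radius_eq_top ℝ 𝔸).symm ▸ edist_lt_top _ _)
      ((NormedSpace.expSeries_radius_eq_top ℝ 𝔸).symm ▸ edist_lt_top _ _)
  simp only [hsplit, ← mul_assoc]
  exact (hasDerivAt_exp_smul_const' a x).mul_const _

section PartialDerivatives

variable {E : Type*} [NormedRing E] [NormedAlgebra ℝ E]

theorem eqOn_px_of_hasDerivAt {Q : ℝ × ℝ → E} {g g' : ℝ → E} {S : Set ℝ} {t : ℝ}
    (hS : IsOpen S) (hQ : EqOn (fun x => Q (x, t)) g S) (hg : ∀ y ∈ S, HasDerivAt g (g' y) y) :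
    EqOn (fun x => px Q (x, t)) g' S := fun y hy => by
  change deriv (fun x => Q (x, t)) y = g' y
  rw [(hQ.eventuallyEq_of_mem (hS.mem_nhds hy)).deriv_eq]
  exact (hg y hy).deriv

theorem eqOn_px_px_px {W : ℝ × ℝ → E} {c : ℝ → E} {a : E} {S : Set ℝ} {t : ℝ} (hS : IsOpen S)
    (hc : ∀ y ∈ S, HasDerivAt c (c y * c y - c y * a) y)
    (hW : ∀ y ∈ S, HasDerivAt (fun x => W (x, t)) (c y * W (y, t)) y) :
    EqOn (fun x => px (px (px W)) (x, t))
      (fun y => (6 * (c y * c y * c y) - 3 * (c y * a * c y) - 3 * (c y * c y * a)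
        + c y * a * a) * W (y, t)) S := by
  have h1 : EqOn (fun x => px W (x, t)) (fun y => c y * W (y, t)) S :=
    eqOn_px_of_hasDerivAt hS (fun _ _ => rfl) hW
  have h2 : EqOn (fun x => px (px W) (x, t))
      (fun y => (2 * (c y * c y) - c y * a) * W (y, t)) S :=
    eqOn_px_of_hasDerivAt hS h1 fun y hy =>
      ((hc y hy).mul (hW y hy)).congr_deriv (by noncomm_ring)
  exact eqOn_px_of_hasDerivAt hS h2 fun y hy =>
    (((((hc y hy).mul (hc y hy)).const_mul 2).sub ((hc y hy).mul_const a)).mul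
      (hW y hy)).congr_deriv (by simp only [Pi.mul_apply, Pi.sub_apply]; noncomm_ring)

end PartialDerivatives

theorem stmt_8_general (A₀ B : A)
    (L : ℝ × ℝ → A) (hL : L = fun p : ℝ × ℝ => NormedSpace.exp (p.1 • A₀ + p.2 • A₀ ^ 3) * B)
    (W : ℝ × ℝ → A) (hW : W = fun p => Ring.inverse (1 + L p) * (A₀ * L p + L p * A₀)) :
    ∀ p : ℝ × ℝ, IsUnit (1 + L p) →
      pt W p = px (px (px W)) p + 3 * (px W p * px W p) := by
  rintro ⟨x, t⟩ hp
  change W = fun p => kdvPotential A₀ (L p) at hW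
  subst hW
  have hLx : ∀ y s : ℝ, HasDerivAt (fun y => L (y, s)) (A₀ * L (y, s)) y := fun y s => by
    simpa only [hL, mul_assoc] using
      ((((Commute.refl A₀).pow_right 3).smul_right s).hasDerivAt_exp_smul_add y).mul_const B
  have hLt : ∀ y s : ℝ, HasDerivAt (fun s => L (y, s)) (A₀ ^ 3 * L (y, s)) s := fun y s => by
    simpa only [hL, mul_assoc, add_comm (y • A₀)] using
      ((((Commute.refl A₀).pow_left 3).smul_right y).hasDerivAt_exp_smul_add s).mul_const B
  set S := {y | IsUnit (1 + L (y, t))}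
  have hS : IsOpen S := Units.isOpen.preimage <|
    continuous_const.add (continuous_iff_continuousAt.2 fun y => (hLx y t).continuousAt)
  have hc := fun y (hy : y ∈ S) => (hLx y t).inverse_one_add_mul hy
  have hWx := fun y (hy : y ∈ S) => (hLx y t).kdvPotential (Commute.refl A₀) hy
  have hW₁ : px (fun p => kdvPotential A₀ (L p)) (x, t) = _ :=
    eqOn_px_of_hasDerivAt hS (fun _ _ => rfl) hWx hp
  have hW₃ : px (px (px fun p => kdvPotential A₀ (L p))) (x, t) = _ :=
    eqOn_px_px_px hS hc hWx hp
  have hpow : Ring.inverse (1 + L (x, t)) * A₀ ^ 3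
      = Ring.inverse (1 + L (x, t)) * A₀ * A₀ ^ 2 := by
    rw [pow_succ', mul_assoc]
  rw [pt, ((hLt x t).kdvPotential ((Commute.refl A₀).pow_left 3) hp).deriv, hW₁, hW₃, hpow]
  exact mul_pow_two_eq_of_mul_eq (kdvPotential_mul_inverse_one_add_mul A₀ hp)

theorem stmt_8 (A₀ B : A) (hA : IsUnit A₀)
    (L : ℝ × ℝ → A) (hL : L = fun p : ℝ × ℝ => NormedSpace.exp (p.1 • A₀ + p.2 • A₀ ^ 3) * B)
    (W : ℝ × ℝ → A) (hW : W = fun p => Ring.inverse (1 + L p) * (A₀ * L p + L p * A₀)) :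
    ∀ p : ℝ × ℝ, IsUnit (1 + L p) →
      pt W p = px (px (px W)) p + 3 * (px W p * px W p) :=
  stmt_8_general A₀ B L hL W hW
end
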